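/- arXiv:gr-qc/0208015 — 3 statements merged into one kernel-verified Lean document; each statement's English description precedes it below -/
import Mathlib

section
/- Let Φ⁺ : σ → V⁺ and Φ⁻ : σ → V⁻ be smooth embeddings, and for each A = 1,…,m let ξ_A^± be vector fields on V^± tangent to Φ^±(σ) and Φ^±-related to the same vector fields γ_A on σ. Assume the γ_A are pointwise linearly independent on σ, and that [ξ_A^±, ξ_B^±] = C^{±C}_{AB} ξ_C^± with constants C^{±C}_{AB}. Then the structure constants coincide: C^{+C}_{AB} = C^{−C}_{AB}, i.e., the algebraic type of the preserved group is the same at both sides of the matching hypersurface. -/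
/-!
Coordinate (local-chart) formalization of pseudo-Riemannian geometry on `ℝⁿ`:
manifolds are modeled by `Pt n = Fin n → ℝ`, tensor fields by their component
functions, and all differential-geometric operations (Lie derivatives, the
Levi-Civita connection via Christoffel symbols, curvature, pullbacks along
embeddings, exterior derivatives and wedge products) are defined explicitly.
-/

noncomputable section
open scoped BigOperators

abbrev Pt (n : ℕ) : Type := Fin n → ℝ

/-- Partial derivative `∂_a f` of a scalar function. -/
def pd {n : ℕ} (f : Pt n → ℝ) (a : Fin n) (x : Pt n) : ℝ :=
  fderiv ℝ f x (Pi.single a 1)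

/-- Pairing of a covector (components `ω`) with a vector (components `u`). -/
def ip {n : ℕ} (ω u : Fin n → ℝ) : ℝ := ∑ α, ω α * u α

/-- Scalar product of two vectors with respect to the metric `g`. -/
def gdot {n : ℕ} (g : Pt n → Fin n → Fin n → ℝ) (x : Pt n) (u v : Fin n → ℝ) : ℝ :=
  ∑ a, ∑ b, g x a b * u a * v b

/-- Index lowering: the 1-form `ξ_♭` metrically dual to the vector field `ξ`. -/
def flat {n : ℕ} (g : Pt n → Fin n → Fin n → ℝ) (ξ : Pt n → Pt n) (x : Pt n) (b : Fin n) : ℝ :=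
  ∑ c, g x b c * ξ x c

/-- Lie derivative `(ℒ_ξ g)_{ab}` of a symmetric 2-covariant tensor field `g`
along the vector field `ξ`. -/
def lieD {n : ℕ} (g : Pt n → Fin n → Fin n → ℝ) (ξ : Pt n → Pt n) (x : Pt n) (a b : Fin n) : ℝ :=
  ∑ c, (ξ x c * pd (fun y => g y a b) c x
      + g x c b * pd (fun y => ξ y c) a x
      + g x a c * pd (fun y => ξ y c) b x)

/-- Lie bracket `[ξ, η]` of two vector fields. -/
def lieBr {n : ℕ} (ξ η : Pt n → Pt n) (x : Pt n) : Pt n :=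
  fun a => ∑ b, (ξ x b * pd (fun y => η y a) b x - η x b * pd (fun y => ξ y a) b x)

/-- Christoffel symbols `Γ^a_{bc}` of the Levi-Civita connection of `g`
(`ginv` is the inverse metric). -/
def Chr {n : ℕ} (g ginv : Pt n → Fin n → Fin n → ℝ) (a b c : Fin n) (x : Pt n) : ℝ :=
  (1/2) * ∑ d, ginv x a d *
    (pd (fun y => g y d b) c x + pd (fun y => g y d c) b x - pd (fun y => g y b c) d x)

/-- Covariant derivative `∇_a ω_b` of a 1-form `ω`. -/
def covD {n : ℕ} (g ginv : Pt n → Fin n → Fin n → ℝ) (ω : Pt n → Fin n → ℝ)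
    (x : Pt n) (a b : Fin n) : ℝ :=
  pd (fun y => ω y b) a x - ∑ c, Chr g ginv c a b x * ω x c

/-- Covariant derivative `∇_m S_{abcd}` of a 4-covariant tensor field `S`. -/
def covD4 {n : ℕ} (g ginv : Pt n → Fin n → Fin n → ℝ)
    (S : Pt n → Fin n → Fin n → Fin n → Fin n → ℝ) (x : Pt n) (m a b c d : Fin n) : ℝ :=
  pd (fun y => S y a b c d) m x
    - ∑ e, Chr g ginv e m a x * S x e b c d
    - ∑ e, Chr g ginv e m b x * S x a e c d
    - ∑ e, Chr g ginv e m c x * S x a b e d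
    - ∑ e, Chr g ginv e m d x * S x a b c e

/-- Riemann tensor `R^a_{bcd}` of the Levi-Civita connection. -/
def Riem {n : ℕ} (g ginv : Pt n → Fin n → Fin n → ℝ) (a b c d : Fin n) (x : Pt n) : ℝ :=
  pd (fun y => Chr g ginv a d b y) c x - pd (fun y => Chr g ginv a c b y) d x
    + ∑ e, (Chr g ginv a c e x * Chr g ginv e d b x - Chr g ginv a d e x * Chr g ginv e c b x)

/-- Ricci tensor `R_{bd} = R^a_{bad}`. -/
def RicciT {n : ℕ} (g ginv : Pt n → Fin n → Fin n → ℝ) (b d : Fin n) (x : Pt n) : ℝ :=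
  ∑ a, Riem g ginv a b a d x

/-- Normalized antisymmetrization of a 3-index quantity. -/
def asym3 {ι : Type*} (T : ι → ι → ι → ℝ) (a b c : ι) : ℝ :=
  (1/6) * ∑ σ : Equiv.Perm (Fin 3),
    ((Equiv.Perm.sign σ : ℤ) : ℝ) * T (![a, b, c] (σ 0)) (![a, b, c] (σ 1)) (![a, b, c] (σ 2))

/-- Normalized antisymmetrization of a 4-index quantity. -/
def asym4 {ι : Type*} (T : ι → ι → ι → ι → ℝ) (a b c d : ι) : ℝ :=
  (1/24) * ∑ σ : Equiv.Perm (Fin 4),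
    ((Equiv.Perm.sign σ : ℤ) : ℝ) *
      T (![a, b, c, d] (σ 0)) (![a, b, c, d] (σ 1)) (![a, b, c, d] (σ 2)) (![a, b, c, d] (σ 3))

/-- Pullback `Φ* g` of a 2-covariant tensor field along a map `Φ`
(first fundamental form when `Φ` is an embedding and `g` the metric). -/
def pull2 {d m : ℕ} (Φ : Pt d → Pt m) (g : Pt m → Fin m → Fin m → ℝ)
    (p : Pt d) (a b : Fin d) : ℝ :=
  ∑ α, ∑ β, g (Φ p) α β *
    fderiv ℝ Φ p (Pi.single a 1) α * fderiv ℝ Φ p (Pi.single b 1) β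

/-- The tangent frame `e_a = dΦ(∂/∂λ^a)` along the hypersurface `Σ = Φ(σ)`. -/
def eF {d : ℕ} (Φ : Pt d → Pt (d+1)) (a : Fin d) (p : Pt d) : Pt (d+1) :=
  fderiv ℝ Φ p (Pi.single a 1)

/-- Exterior derivative `dω` of a 1-form evaluated on two vectors:
`dω(u,v) = u^α v^β (∂_α ω_β - ∂_β ω_α)`. -/
def dext {n : ℕ} (ω : Pt n → Fin n → ℝ) (x : Pt n) (u v : Fin n → ℝ) : ℝ :=
  ∑ α, ∑ β, u α * v β * (pd (fun y => ω y β) α x - pd (fun y => ω y α) β x)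

/-- Wedge product of two covectors evaluated on two vectors. -/
def wdg2 {n : ℕ} (ω τ : Fin n → ℝ) (u v : Fin n → ℝ) : ℝ :=
  ip ω u * ip τ v - ip ω v * ip τ u

/-- Wedge product of four covectors evaluated on four vectors (determinant convention). -/
def wdg4 {n : ℕ} (ω₁ ω₂ ω₃ ω₄ : Fin n → ℝ) (u : Fin 4 → Fin n → ℝ) : ℝ :=
  ∑ σ : Equiv.Perm (Fin 4), ((Equiv.Perm.sign σ : ℤ) : ℝ) *
    (ip ω₁ (u (σ 0)) * ip ω₂ (u (σ 1)) * ip ω₃ (u (σ 2)) * ip ω₄ (u (σ 3)))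

/-- The 4-form `A_♭ ∧ B_♭ ∧ d(B_♭)` built from two vector fields `A`, `B`
(indices lowered with `g`), evaluated on four vectors. -/
def form4 {n : ℕ} (g : Pt n → Fin n → Fin n → ℝ) (A B : Pt n → Pt n) (x : Pt n)
    (u : Fin 4 → Fin n → ℝ) : ℝ :=
  (1/2) * ∑ σ : Equiv.Perm (Fin 4), ((Equiv.Perm.sign σ : ℤ) : ℝ) *
    (ip (flat g A x) (u (σ 0)) * ip (flat g B x) (u (σ 1)) *
      dext (flat g B) x (u (σ 2)) (u (σ 3)))

/-- Covariant derivative `∇_{e_a} ℓ` of a vector field `ℓ` defined along `Σ = Φ(σ)`. -/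
def covVecS {d : ℕ} (g ginv : Pt (d+1) → Fin (d+1) → Fin (d+1) → ℝ) (Φ : Pt d → Pt (d+1))
    (ℓ : Pt d → Pt (d+1)) (a : Fin d) (p : Pt d) : Pt (d+1) :=
  fun μ => pd (fun q => ℓ q μ) a p + ∑ ν, ∑ ρ, Chr g ginv μ ν ρ (Φ p) * eF Φ a p ν * ℓ p ρ

/-- The lowered components `ℓ_ν` along `Σ` of a vector field `ℓ` defined along `Σ`. -/
def flatS {d : ℕ} (g : Pt (d+1) → Fin (d+1) → Fin (d+1) → ℝ) (Φ : Pt d → Pt (d+1))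
    (ℓ : Pt d → Pt (d+1)) (p : Pt d) (ν : Fin (d+1)) : ℝ :=
  ∑ ρ, g (Φ p) ν ρ * ℓ p ρ

/-- Generalized second fundamental form `H_{ab} = e_a^μ e_b^ν ∇_μ ℓ_ν`
with respect to the rigging `ℓ`. -/
def Hgen {d : ℕ} (g ginv : Pt (d+1) → Fin (d+1) → Fin (d+1) → ℝ) (Φ : Pt d → Pt (d+1))
    (ℓ : Pt d → Pt (d+1)) (a b : Fin d) (p : Pt d) : ℝ :=
  ∑ ν, eF Φ b p ν * (pd (fun q => flatS g Φ ℓ q ν) a p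
    - ∑ c, (∑ μ, eF Φ a p μ * Chr g ginv c μ ν (Φ p)) * flatS g Φ ℓ p c)

/-- Transversal component `B_a = 2 ℓ^α e_a^β ∇_{[α} ω_{β]}` of `dω` along `Σ`. -/
def Bcoef {d : ℕ} (g ginv : Pt (d+1) → Fin (d+1) → Fin (d+1) → ℝ) (Φ : Pt d → Pt (d+1))
    (ℓ : Pt d → Pt (d+1)) (ω : Pt (d+1) → Fin (d+1) → ℝ) (a : Fin d) (p : Pt d) : ℝ :=
  ∑ α, ∑ β, ℓ p α * eF Φ a p β * (covD g ginv ω (Φ p) α β - covD g ginv ω (Φ p) β α)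

/-- Tangential component `A_{ab} = e_{[a}(ω_{b]})` of `dω` along `Σ`. -/
def Acoef {d : ℕ} (Φ : Pt d → Pt (d+1)) (ω : Pt (d+1) → Fin (d+1) → ℝ)
    (a b : Fin d) (p : Pt d) : ℝ :=
  (1/2) * (pd (fun q => ip (ω (Φ q)) (eF Φ b q)) a p - pd (fun q => ip (ω (Φ q)) (eF Φ a q)) b p)

/-- The identified frame `{ℓ, e_a}` along `Σ`, indexed by `Option (Fin d)`. -/
def frameV {d : ℕ} (Φ : Pt d → Pt (d+1)) (ℓ : Pt d → Pt (d+1)) (p : Pt d) :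
    Option (Fin d) → Pt (d+1)
  | none => ℓ p
  | some a => eF Φ a p


/-! ### Auxiliary lemmas for Statement 4 -/

lemma htop' : ((⊤:ℕ∞) : WithTop ℕ∞) ≠ 0 := by exact_mod_cast ENat.top_ne_zero

lemma fderiv_eq_sum_pd {n : ℕ} (f : Pt n → ℝ) (x u : Pt n) :
    fderiv ℝ f x u = ∑ β, u β * pd f β x := by
  have hu : u = ∑ β, u β • (Pi.single β 1 : Pt n) := by
    funext j
    simp [Finset.sum_apply, Pi.single_apply]
  conv_lhs => rw [hu]
  rw [map_sum]
  simp [pd, smul_eq_mul]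

lemma fderiv_proj {d n : ℕ} (f : Pt d → Pt n) {p : Pt d}
    (hf : DifferentiableAt ℝ f p) (α : Fin n) (v : Pt d) :
    fderiv ℝ (fun q => f q α) p v = fderiv ℝ f p v α := by
  have h : (fun q => f q α)
      = (ContinuousLinearMap.proj (R := ℝ) (φ := fun _ : Fin n => ℝ) α) ∘ f := rfl
  rw [h, fderiv_comp p (ContinuousLinearMap.proj α).differentiableAt hf]
  simp

lemma lieBr_fderiv {n : ℕ} (ξ η : Pt n → Pt n) (x : Pt n) (a : Fin n) :
    lieBr ξ η x a
      = fderiv ℝ (fun y => η y a) x (ξ x) - fderiv ℝ (fun y => ξ y a) x (η x) := by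
  rw [fderiv_eq_sum_pd, fderiv_eq_sum_pd, ← Finset.sum_sub_distrib]
  rfl

/-- Naturality of the Lie bracket: if `γA, γB` are `Φ`-related to `ξA, ξB`,
then `[γA, γB]` is `Φ`-related to `[ξA, ξB]`. -/
lemma fderiv_lieBr_related {dd nn : ℕ} (Φ : Pt dd → Pt nn)
    (γA γB : Pt dd → Pt dd) (ξA ξB : Pt nn → Pt nn)
    (hΦ : ContDiff ℝ (⊤ : ℕ∞) Φ)
    (hγA : ContDiff ℝ (⊤ : ℕ∞) γA) (hγB : ContDiff ℝ (⊤ : ℕ∞) γB)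
    (hξA : ContDiff ℝ (⊤ : ℕ∞) ξA) (hξB : ContDiff ℝ (⊤ : ℕ∞) ξB)
    (hA : ∀ p, fderiv ℝ Φ p (γA p) = ξA (Φ p))
    (hB : ∀ p, fderiv ℝ Φ p (γB p) = ξB (Φ p))
    (p : Pt dd) :
    fderiv ℝ Φ p (lieBr γA γB p) = lieBr ξA ξB (Φ p) := by
  funext α
  set φ : Pt dd → ℝ := fun q => Φ q α with hφdef
  have hφ : ContDiff ℝ (⊤ : ℕ∞) φ :=
    (ContinuousLinearMap.proj (R := ℝ) (φ := fun _ : Fin nn => ℝ) α).contDiff.comp hΦ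
  have hφd : Differentiable ℝ φ := hφ.differentiable htop'
  have hΦd : Differentiable ℝ Φ := hΦ.differentiable htop'
  have hγAd : Differentiable ℝ γA := hγA.differentiable htop'
  have hγBd : Differentiable ℝ γB := hγB.differentiable htop'
  have hξAd : Differentiable ℝ (fun y => ξA y α) := fun y =>
    ((ContinuousLinearMap.proj (R := ℝ) (φ := fun _ : Fin nn => ℝ) α).differentiableAt).comp y
      ((hξA.differentiable htop') y)
  have hξBd : Differentiable ℝ (fun y => ξB y α) := fun y =>
    ((ContinuousLinearMap.proj (R := ℝ) (φ := fun _ : Fin nn => ℝ) α).differentiableAt).comp y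
      ((hξB.differentiable htop') y)
  have hc : ContDiff ℝ (⊤ : ℕ∞) (fderiv ℝ φ) := hφ.fderiv_right (by exact_mod_cast le_top)
  have hcd : Differentiable ℝ (fderiv ℝ φ) := hc.differentiable htop'
  have hsym : ∀ v w, fderiv ℝ (fderiv ℝ φ) p v w = fderiv ℝ (fderiv ℝ φ) p w v :=
    second_derivative_symmetric (fun y => (hφd y).hasFDerivAt) ((hcd p).hasFDerivAt)
  have key : ∀ (γ1 γ2 : Pt dd → Pt dd) (ξ2 : Pt nn → Pt nn),
      Differentiable ℝ γ2 → Differentiable ℝ (fun y => ξ2 y α) →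
      (∀ q, fderiv ℝ Φ q (γ2 q) = ξ2 (Φ q)) →
      fderiv ℝ (fun y => ξ2 y α) (Φ p) (fderiv ℝ Φ p (γ1 p))
        = fderiv ℝ (fderiv ℝ φ) p (γ1 p) (γ2 p) + fderiv ℝ φ p (fderiv ℝ γ2 p (γ1 p)) := by
    intro γ1 γ2 ξ2 hγ2d hξ2d hrel2
    have hfun : (fun q => ξ2 (Φ q) α) = fun q => fderiv ℝ φ q (γ2 q) := by
      funext q
      rw [fderiv_proj Φ (hΦd q) α (γ2 q), hrel2 q]
    have h1 : fderiv ℝ (fun q => ξ2 (Φ q) α) p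
        = (fderiv ℝ (fun y => ξ2 y α) (Φ p)).comp (fderiv ℝ Φ p) := by
      exact fderiv_comp p (hξ2d (Φ p)) (hΦd p)
    have h2 : fderiv ℝ (fun q => fderiv ℝ φ q (γ2 q)) p
        = (fderiv ℝ φ p).comp (fderiv ℝ γ2 p) + (fderiv ℝ (fderiv ℝ φ) p).flip (γ2 p) :=
      fderiv_clm_apply (hcd p) (hγ2d p)
    have h3 := h1.symm.trans ((congrArg (fun F => fderiv ℝ F p) hfun).trans h2)
    have h4 := congrFun (congrArg (fun (L : Pt dd →L[ℝ] ℝ) => (L : Pt dd → ℝ)) h3) (γ1 p)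
    simpa [add_comm] using h4
  have kB := key γA γB ξB hγBd hξBd hB
  have kA := key γB γA ξA hγAd hξAd hA
  rw [hA p] at kB
  rw [hB p] at kA
  have hbr : lieBr γA γB p = fderiv ℝ γB p (γA p) - fderiv ℝ γA p (γB p) := by
    funext a
    rw [lieBr_fderiv]
    simp [fderiv_proj γB (hγBd p) a (γA p), fderiv_proj γA (hγAd p) a (γB p)]
  rw [← fderiv_proj Φ (hΦd p) α (lieBr γA γB p), lieBr_fderiv, kB, kA, hbr]
  rw [hsym (γB p) (γA p)]
  have := (fderiv ℝ φ p).map_sub (fderiv ℝ γB p (γA p)) (fderiv ℝ γA p (γB p))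
  rw [this]
  ring

/-- preservation of the algebraic type: if the generators `ξ_A^±` on the
two sides are `Φ^±`-related to the same pointwise linearly independent vector fields
`γ_A` on `σ`, then the structure constants of the two groups coincide. -/
theorem structure_constants_coincide {d np nm m : ℕ}
    (Φp : Pt d → Pt np) (Φm : Pt d → Pt nm)
    (ξp : Fin m → Pt np → Pt np) (ξm : Fin m → Pt nm → Pt nm)
    (γ : Fin m → Pt d → Pt d)
    (Cp Cm : Fin m → Fin m → Fin m → ℝ)  -- C A B K = C^K_{AB}
    (hΦp : ContDiff ℝ (⊤ : ℕ∞) Φp) (hΦpinj : Function.Injective Φp)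
    (hΦpimm : ∀ p, Function.Injective (fderiv ℝ Φp p))
    (hΦm : ContDiff ℝ (⊤ : ℕ∞) Φm) (hΦminj : Function.Injective Φm)
    (hΦmimm : ∀ p, Function.Injective (fderiv ℝ Φm p))
    (hξp : ∀ A, ContDiff ℝ (⊤ : ℕ∞) (ξp A)) (hξm : ∀ A, ContDiff ℝ (⊤ : ℕ∞) (ξm A))
    (hγ : ∀ A, ContDiff ℝ (⊤ : ℕ∞) (γ A))
    -- the γ_A are pointwise linearly independent on σ
    (hli : ∀ p, LinearIndependent ℝ (fun A => γ A p))
    (hrelp : ∀ A p, fderiv ℝ Φp p (γ A p) = ξp A (Φp p))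
    (hrelm : ∀ A p, fderiv ℝ Φm p (γ A p) = ξm A (Φm p))
    (halgp : ∀ A B x, lieBr (ξp A) (ξp B) x = ∑ K, Cp A B K • ξp K x)
    (halgm : ∀ A B x, lieBr (ξm A) (ξm B) x = ∑ K, Cm A B K • ξm K x) :
    Cp = Cm := by
  have hp : ∀ A B (p : Pt d), lieBr (γ A) (γ B) p = ∑ K, Cp A B K • γ K p := by
    intro A B p
    apply hΦpimm p
    rw [fderiv_lieBr_related Φp (γ A) (γ B) (ξp A) (ξp B) hΦp (hγ A) (hγ B)
      (hξp A) (hξp B) (hrelp A) (hrelp B) p, halgp, map_sum]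
    simp [hrelp]
  have hm : ∀ A B (p : Pt d), lieBr (γ A) (γ B) p = ∑ K, Cm A B K • γ K p := by
    intro A B p
    apply hΦmimm p
    rw [fderiv_lieBr_related Φm (γ A) (γ B) (ξm A) (ξm B) hΦm (hγ A) (hγ B)
      (hξm A) (hξm B) (hrelm A) (hrelm B) p, halgm, map_sum]
    simp [hrelm]
  funext A B K
  have h0 : ∑ K, (Cp A B K - Cm A B K) • γ K (0 : Pt d) = 0 := by
    simp only [sub_smul, Finset.sum_sub_distrib, ← hp A B 0, ← hm A B 0, sub_self]
  have hz := (Fintype.linearIndependent_iff.mp (hli 0)) _ h0 K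
  linarith
end
end

section
/- (Main theorem, algebraic core.) Under a matching preserving a 2-dimensional conformal group: with identified frame {ℓ, e_a} and dual {n, w^a} along Σ, identified tangential components ξ_a, ξ_ℓ, η_a, η_ℓ of the generators, and writing the restrictions of the two 4-forms as in (η∧ξ∧dξ)|_Σ = {η_ℓ ξ_c A_{ab} − η_c(ξ_ℓ A_{ab} − ξ_a B_b)} n∧w^a∧w^b∧w^c from either side, if [A_{ab}] = 0 (jump of A vanishes) then the jump of the 4-form equals η_c ξ_a [B_b] n∧w^a∧w^b∧w^c; consequently the 4-forms η⁺∧ξ⁺∧dξ⁺ and η⁻∧ξ⁻∧dξ⁻ agree on Σ if and only if η_[a ξ_b [B_{c]}] = 0. -/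
/-!
Coordinate (local-chart) formalization of pseudo-Riemannian geometry on `ℝⁿ`:
manifolds are modeled by `Pt n = Fin n → ℝ`, tensor fields by their component
functions, and all differential-geometric operations (Lie derivatives, the
Levi-Civita connection via Christoffel symbols, curvature, pullbacks along
embeddings, exterior derivatives and wedge products) are defined explicitly.
-/

noncomputable section
open scoped BigOperators

/-- The restricted 4-form `{η_ℓ ξ_c A_{ab} − η_c (ξ_ℓ A_{ab} − ξ_a B_b)} n ∧ w^a ∧ w^b ∧ w^c`
appearing in the proof of the main theorem, evaluated on four vectors. -/
def restr4Form {d : ℕ} (n : Pt d → Fin (d+1) → ℝ) (w : Fin d → Pt d → Fin (d+1) → ℝ)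
    (ξa ηa : Fin d → Pt d → ℝ) (ξℓ ηℓ : Pt d → ℝ)
    (A : Fin d → Fin d → Pt d → ℝ) (B : Fin d → Pt d → ℝ)
    (p : Pt d) (u : Fin 4 → Pt (d+1)) : ℝ :=
  ∑ a, ∑ b, ∑ c,
    (ηℓ p * ξa c p * A a b p - ηa c p * (ξℓ p * A a b p - ξa a p * B b p)) *
      wdg4 (n p) (w a p) (w b p) (w c p) u

section AuxJump

lemma asym3_eq {ι : Type*} (T : ι → ι → ι → ℝ) (a b c : ι) :
    asym3 T a b c = (1/6) * (T a b c - T a c b - T b a c + T b c a + T c a b - T c b a) := by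
  have h : (Finset.univ : Finset (Equiv.Perm (Fin 3))) =
    {1, Equiv.swap 0 1, Equiv.swap 0 2, Equiv.swap 1 2,
     Equiv.swap 0 1 * Equiv.swap 1 2, Equiv.swap 0 2 * Equiv.swap 1 2} := by decide
  rw [asym3, h, Finset.sum_insert (by decide), Finset.sum_insert (by decide),
    Finset.sum_insert (by decide), Finset.sum_insert (by decide),
    Finset.sum_insert (by decide), Finset.sum_singleton]
  have s1 : Equiv.Perm.sign (Equiv.swap (0:Fin 3) 1) = -1 := by decide
  have s2 : Equiv.Perm.sign (Equiv.swap (0:Fin 3) 2) = -1 := by decide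
  have s3 : Equiv.Perm.sign (Equiv.swap (1:Fin 3) 2) = -1 := by decide
  have s4 : Equiv.Perm.sign (Equiv.swap (0:Fin 3) 1 * Equiv.swap 1 2) = 1 := by decide
  have s5 : Equiv.Perm.sign (Equiv.swap (0:Fin 3) 2 * Equiv.swap 1 2) = 1 := by decide
  rw [s1, s2, s3, s4, s5]
  simp (config := { decide := true }) [Equiv.swap_apply_def, Equiv.Perm.mul_apply]
  ring

lemma wdg4_swap12 {n : ℕ} (ω₁ ω₂ ω₃ ω₄ : Fin n → ℝ) (u : Fin 4 → Fin n → ℝ) :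
    wdg4 ω₁ ω₃ ω₂ ω₄ u = - wdg4 ω₁ ω₂ ω₃ ω₄ u := by
  rw [wdg4, wdg4, ← Finset.sum_neg_distrib]
  exact Fintype.sum_equiv (Equiv.mulRight (Equiv.swap 1 2)) _ _ (fun τ => by
    simp (config := { decide := true }) [Equiv.Perm.mul_apply, Equiv.Perm.sign_mul,
      Equiv.swap_apply_def]
    ring_nf <;> tauto)

lemma wdg4_swap23 {n : ℕ} (ω₁ ω₂ ω₃ ω₄ : Fin n → ℝ) (u : Fin 4 → Fin n → ℝ) :
    wdg4 ω₁ ω₂ ω₄ ω₃ u = - wdg4 ω₁ ω₂ ω₃ ω₄ u := by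
  rw [wdg4, wdg4, ← Finset.sum_neg_distrib]
  exact Fintype.sum_equiv (Equiv.mulRight (Equiv.swap 2 3)) _ _ (fun τ => by
    simp (config := { decide := true }) [Equiv.Perm.mul_apply, Equiv.Perm.sign_mul,
      Equiv.swap_apply_def]
    ring_nf <;> tauto)

lemma wdg4_swap13 {n : ℕ} (ω₁ ω₂ ω₃ ω₄ : Fin n → ℝ) (u : Fin 4 → Fin n → ℝ) :
    wdg4 ω₁ ω₄ ω₃ ω₂ u = - wdg4 ω₁ ω₂ ω₃ ω₄ u := by
  rw [wdg4, wdg4, ← Finset.sum_neg_distrib]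
  exact Fintype.sum_equiv (Equiv.mulRight (Equiv.swap 1 3)) _ _ (fun τ => by
    simp (config := { decide := true }) [Equiv.Perm.mul_apply, Equiv.Perm.sign_mul,
      Equiv.swap_apply_def]
    ring_nf <;> tauto)

lemma wdg4_eq_det {n : ℕ} (ω₁ ω₂ ω₃ ω₄ : Fin n → ℝ) (u : Fin 4 → Fin n → ℝ) :
    wdg4 ω₁ ω₂ ω₃ ω₄ u =
      Matrix.det (Matrix.of fun r c => ip (![ω₁, ω₂, ω₃, ω₄] c) (u r)) := by
  rw [Matrix.det_apply, wdg4]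
  refine Finset.sum_congr rfl fun σ _ => ?_
  rw [Fin.prod_univ_four]
  simp [Matrix.of_apply, Units.smul_def, zsmul_eq_mul]

lemma det_fin_four (A : Matrix (Fin 4) (Fin 4) ℝ) :
    Matrix.det A =
      A 0 0 * (A 1 1 * A 2 2 * A 3 3 - A 1 1 * A 2 3 * A 3 2 - A 1 2 * A 2 1 * A 3 3
        + A 1 2 * A 2 3 * A 3 1 + A 1 3 * A 2 1 * A 3 2 - A 1 3 * A 2 2 * A 3 1)
      - A 0 1 * (A 1 0 * A 2 2 * A 3 3 - A 1 0 * A 2 3 * A 3 2 - A 1 2 * A 2 0 * A 3 3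
        + A 1 2 * A 2 3 * A 3 0 + A 1 3 * A 2 0 * A 3 2 - A 1 3 * A 2 2 * A 3 0)
      + A 0 2 * (A 1 0 * A 2 1 * A 3 3 - A 1 0 * A 2 3 * A 3 1 - A 1 1 * A 2 0 * A 3 3
        + A 1 1 * A 2 3 * A 3 0 + A 1 3 * A 2 0 * A 3 1 - A 1 3 * A 2 1 * A 3 0)
      - A 0 3 * (A 1 0 * A 2 1 * A 3 2 - A 1 0 * A 2 2 * A 3 1 - A 1 1 * A 2 0 * A 3 2
        + A 1 1 * A 2 2 * A 3 0 + A 1 2 * A 2 0 * A 3 1 - A 1 2 * A 2 1 * A 3 0) := by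
  rw [Matrix.det_succ_row_zero]
  simp (config := { decide := true }) [Fin.sum_univ_succ, Matrix.det_fin_three, Fin.succAbove,
    show (Fin.succ 2 : Fin 4) = 3 from rfl, show (Fin.castSucc 2 : Fin 4) = 2 from rfl]
  ring

lemma wdg4_frame {m : ℕ} (np wx wy wz : Fin m → ℝ) (v0 v1 v2 v3 : Fin m → ℝ)
    (h00 : ip np v0 = 1) (h01 : ip np v1 = 0) (h02 : ip np v2 = 0) (h03 : ip np v3 = 0)
    (hx0 : ip wx v0 = 0) (hy0 : ip wy v0 = 0) (hz0 : ip wz v0 = 0) :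
    wdg4 np wx wy wz ![v0, v1, v2, v3] =
      ip wx v1 * (ip wy v2 * ip wz v3 - ip wy v3 * ip wz v2)
      - ip wy v1 * (ip wx v2 * ip wz v3 - ip wx v3 * ip wz v2)
      + ip wz v1 * (ip wx v2 * ip wy v3 - ip wx v3 * ip wy v2) := by
  rw [wdg4_eq_det, det_fin_four]
  simp [Matrix.of_apply, h00, h01, h02, h03, hx0, hy0, hz0]
  ring

lemma tsum_congr3 {ι : Type*} [Fintype ι] (f g : ι → ι → ι → ℝ)
    (h : ∀ x y z, f x y z = g x y z) :
    ∑ x, ∑ y, ∑ z, f x y z = ∑ x, ∑ y, ∑ z, g x y z :=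
  Finset.sum_congr rfl fun x _ => Finset.sum_congr rfl fun y _ =>
    Finset.sum_congr rfl fun z _ => h x y z

lemma sum_alt {ι : Type*} [Fintype ι] (C W : ι → ι → ι → ℝ)
    (hW12 : ∀ x y z, W y x z = -W x y z)
    (hW23 : ∀ x y z, W x z y = -W x y z)
    (hW13 : ∀ x y z, W z y x = -W x y z)
    (hC : ∀ x y z, C x y z - C x z y - C y x z + C y z x + C z x y - C z y x = 0) :
    ∑ x, ∑ y, ∑ z, C x y z * W x y z = 0 := by
  have e1 : ∑ x, ∑ y, ∑ z, C x z y * W x y z = -∑ x, ∑ y, ∑ z, C x y z * W x y z := by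
    calc ∑ x, ∑ y, ∑ z, C x z y * W x y z
        = ∑ x, ∑ y, ∑ z, C x y z * W x z y :=
          Finset.sum_congr rfl fun x _ => Finset.sum_comm
      _ = ∑ x, ∑ y, ∑ z, -(C x y z * W x y z) :=
          tsum_congr3 _ _ fun a b c => by rw [hW23 a b c]; ring
      _ = -∑ x, ∑ y, ∑ z, C x y z * W x y z := by simp only [Finset.sum_neg_distrib]
  have e2 : ∑ x, ∑ y, ∑ z, C y x z * W x y z = -∑ x, ∑ y, ∑ z, C x y z * W x y z := by
    calc ∑ x, ∑ y, ∑ z, C y x z * W x y z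
        = ∑ x, ∑ y, ∑ z, C x y z * W y x z := Finset.sum_comm
      _ = ∑ x, ∑ y, ∑ z, -(C x y z * W x y z) :=
          tsum_congr3 _ _ fun a b c => by rw [hW12 a b c]; ring
      _ = -∑ x, ∑ y, ∑ z, C x y z * W x y z := by simp only [Finset.sum_neg_distrib]
  have e3 : ∑ x, ∑ y, ∑ z, C z y x * W x y z = -∑ x, ∑ y, ∑ z, C x y z * W x y z := by
    calc ∑ x, ∑ y, ∑ z, C z y x * W x y z
        = ∑ x, ∑ y, ∑ z, C z x y * W y x z := Finset.sum_comm
      _ = ∑ x, ∑ y, ∑ z, C y x z * W z x y :=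
          Finset.sum_congr rfl fun x _ => Finset.sum_comm
      _ = ∑ x, ∑ y, ∑ z, C x y z * W z y x := Finset.sum_comm
      _ = ∑ x, ∑ y, ∑ z, -(C x y z * W x y z) :=
          tsum_congr3 _ _ fun a b c => by rw [hW13 a b c]; ring
      _ = -∑ x, ∑ y, ∑ z, C x y z * W x y z := by simp only [Finset.sum_neg_distrib]
  have e4 : ∑ x, ∑ y, ∑ z, C y z x * W x y z = ∑ x, ∑ y, ∑ z, C x y z * W x y z := by
    calc ∑ x, ∑ y, ∑ z, C y z x * W x y z
        = ∑ x, ∑ y, ∑ z, C x z y * W y x z := Finset.sum_comm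
      _ = ∑ x, ∑ y, ∑ z, C x y z * W z x y :=
          Finset.sum_congr rfl fun x _ => Finset.sum_comm
      _ = ∑ x, ∑ y, ∑ z, C x y z * W x y z :=
          tsum_congr3 _ _ fun a b c => by rw [hW12 a c b, hW23 a b c]; ring
  have e5 : ∑ x, ∑ y, ∑ z, C z x y * W x y z = ∑ x, ∑ y, ∑ z, C x y z * W x y z := by
    calc ∑ x, ∑ y, ∑ z, C z x y * W x y z
        = ∑ x, ∑ y, ∑ z, C y x z * W x z y :=
          Finset.sum_congr rfl fun x _ => Finset.sum_comm
      _ = ∑ x, ∑ y, ∑ z, C x y z * W y z x := Finset.sum_comm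
      _ = ∑ x, ∑ y, ∑ z, C x y z * W x y z :=
          tsum_congr3 _ _ fun a b c => by rw [hW13 a c b, hW23 a b c]; ring
  have h6 : ∑ x, ∑ y, ∑ z,
      (C x y z - C x z y - C y x z + C y z x + C z x y - C z y x) * W x y z
      = 6 * ∑ x, ∑ y, ∑ z, C x y z * W x y z := by
    simp only [sub_mul, add_mul, Finset.sum_sub_distrib, Finset.sum_add_distrib]
    rw [e1, e2, e3, e4, e5]; ring
  have hz : ∑ x, ∑ y, ∑ z,
      (C x y z - C x z y - C y x z + C y z x + C z x y - C z y x) * W x y z = 0 := by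
    rw [tsum_congr3 _ (fun _ _ _ => (0:ℝ)) (fun x y z => by rw [hC x y z]; ring)]
    simp
  rw [hz] at h6; linarith

end AuxJump

/-- algebraic core of the main theorem: with identified frame and
components and `[A_{ab}] = 0`, the jump of the restricted 4-form
`η ∧ ξ ∧ dξ` equals `η_c ξ_a [B_b] n ∧ w^a ∧ w^b ∧ w^c`; consequently the two
restricted 4-forms agree if and only if `η_[a ξ_b [B_{c]}] = 0`. -/
theorem jump_of_four_form {d : ℕ}
    (ℓ : Pt d → Pt (d+1)) (e : Fin d → Pt d → Pt (d+1))
    (n : Pt d → Fin (d+1) → ℝ) (w : Fin d → Pt d → Fin (d+1) → ℝ)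
    (ξa ηa : Fin d → Pt d → ℝ) (ξℓ ηℓ : Pt d → ℝ)
    (Ap Am : Fin d → Fin d → Pt d → ℝ) (Bp Bm : Fin d → Pt d → ℝ)
    -- duality of the coframe {n, w^a} with the frame {ℓ, e_a}
    (hnℓ : ∀ p, ip (n p) (ℓ p) = 1)
    (hne : ∀ p a, ip (n p) (e a p) = 0)
    (hwℓ : ∀ p a, ip (w a p) (ℓ p) = 0)
    (hwe : ∀ p a b, ip (w a p) (e b p) = if a = b then (1:ℝ) else 0)
    -- the A coefficients are antisymmetric and their jump vanishes
    (hAanti : ∀ p a b, Ap a b p = -Ap b a p)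
    (hA : ∀ a b p, Ap a b p = Am a b p) :
    (∀ p (u : Fin 4 → Pt (d+1)),
      restr4Form n w ξa ηa ξℓ ηℓ Ap Bp p u - restr4Form n w ξa ηa ξℓ ηℓ Am Bm p u
      = ∑ a, ∑ b, ∑ c, ηa c p * ξa a p * (Bp b p - Bm b p) *
          wdg4 (n p) (w a p) (w b p) (w c p) u)
    ∧
    ((∀ p (u : Fin 4 → Pt (d+1)),
        restr4Form n w ξa ηa ξℓ ηℓ Ap Bp p u = restr4Form n w ξa ηa ξℓ ηℓ Am Bm p u)
      ↔ (∀ p (a b c : Fin d),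
          asym3 (fun a' b' c' => ηa a' p * ξa b' p * (Bp c' p - Bm c' p)) a b c = 0)) := by
  have part1 : ∀ p (u : Fin 4 → Pt (d+1)),
      restr4Form n w ξa ηa ξℓ ηℓ Ap Bp p u - restr4Form n w ξa ηa ξℓ ηℓ Am Bm p u
      = ∑ a, ∑ b, ∑ c, ηa c p * ξa a p * (Bp b p - Bm b p) *
          wdg4 (n p) (w a p) (w b p) (w c p) u := by
    intro p u
    unfold restr4Form
    rw [← Finset.sum_sub_distrib]
    refine Finset.sum_congr rfl fun a _ => ?_
    rw [← Finset.sum_sub_distrib]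
    refine Finset.sum_congr rfl fun b _ => ?_
    rw [← Finset.sum_sub_distrib]
    refine Finset.sum_congr rfl fun c _ => ?_
    rw [hA a b p]; ring
  refine ⟨part1, ?_, ?_⟩
  · intro heq p a b c
    have h0 := part1 p ![ℓ p, e a p, e b p, e c p]
    rw [heq p ![ℓ p, e a p, e b p, e c p], sub_self] at h0
    have hW : ∀ x y z : Fin d,
        wdg4 (n p) (w x p) (w y p) (w z p) ![ℓ p, e a p, e b p, e c p]
        = ip (w x p) (e a p) * (ip (w y p) (e b p) * ip (w z p) (e c p)
            - ip (w y p) (e c p) * ip (w z p) (e b p))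
          - ip (w y p) (e a p) * (ip (w x p) (e b p) * ip (w z p) (e c p)
            - ip (w x p) (e c p) * ip (w z p) (e b p))
          + ip (w z p) (e a p) * (ip (w x p) (e b p) * ip (w y p) (e c p)
            - ip (w x p) (e c p) * ip (w y p) (e b p)) := fun x y z =>
      wdg4_frame _ _ _ _ _ _ _ _ (hnℓ p) (hne p a) (hne p b) (hne p c)
        (hwℓ p x) (hwℓ p y) (hwℓ p z)
    simp only [hW, hwe] at h0
    rw [asym3_eq]
    simp [Finset.sum_ite_eq, Finset.sum_ite_eq', mul_ite, ite_mul, mul_zero, zero_mul,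
      mul_one, one_mul, mul_sub, sub_mul, mul_add, add_mul,
      Finset.sum_sub_distrib, Finset.sum_add_distrib] at h0
    linarith [h0]
  · intro h0 p u
    have hd := part1 p u
    have hz : ∑ a, ∑ b, ∑ c, ηa c p * ξa a p * (Bp b p - Bm b p) *
        wdg4 (n p) (w a p) (w b p) (w c p) u = 0 := by
      have := sum_alt (fun x y z => ηa z p * ξa x p * (Bp y p - Bm y p))
        (fun x y z => wdg4 (n p) (w x p) (w y p) (w z p) u)
        (fun x y z => wdg4_swap12 (n p) (w x p) (w y p) (w z p) u)
        (fun x y z => wdg4_swap23 (n p) (w x p) (w y p) (w z p) u)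
        (fun x y z => wdg4_swap13 (n p) (w x p) (w y p) (w z p) u)
        (fun x y z => by
          have h := h0 p x y z
          rw [asym3_eq] at h
          linear_combination 6 * h)
      simpa using this
    rw [hz] at hd
    exact sub_eq_zero.mp hd
end
end

section
/- Let ξ be a vector field tangent to the hypersurface Σ, ξ|_Σ = ξ^b e_b, and define the generalized second fundamental forms H^±_{ab} = e_a^μ e_b^ν ∇^±_μ ℓ_ν with respect to the identified rigging ℓ. Then the jump of the transversal component of dξ_♭ satisfies [B_a] = ℓ^α e_a^β [ℒ_ξ g_{αβ}] + 2 ξ^b [H_{ab}]. In particular, if ξ^± are conformal Killing fields whose conformal factors agree on Σ, if g(ℓ⁺,ℓ⁺) = g(ℓ⁻,ℓ⁻) and g(ℓ⁺,e_a⁺) = g(ℓ⁻,e_a⁻) on Σ, and if the junction conditions [H_{ab}] = 0 hold, then [B_a] = 0. -/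
/-!
Coordinate (local-chart) formalization of pseudo-Riemannian geometry on `ℝⁿ`:
manifolds are modeled by `Pt n = Fin n → ℝ`, tensor fields by their component
functions, and all differential-geometric operations (Lie derivatives, the
Levi-Civita connection via Christoffel symbols, curvature, pullbacks along
embeddings, exterior derivatives and wedge products) are defined explicitly.
-/

noncomputable section
open scoped BigOperators

/-! ### Auxiliary lemmas -/

section Helpers

lemma fderiv_apply_coords {n : ℕ} (f : Pt n → ℝ) (x v : Pt n) :
    fderiv ℝ f x v = ∑ μ, v μ * pd f μ x := by
  have h := (fderiv ℝ f x).toLinearMap.pi_apply_eq_sum_univ v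
  simp only [ContinuousLinearMap.coe_coe] at h
  rw [h]
  refine Finset.sum_congr rfl fun μ _ => ?_
  rw [smul_eq_mul, pd]
  congr 2
  ext j
  simp [Pi.single_apply, eq_comm]

lemma pd_add {n : ℕ} {f g : Pt n → ℝ} {x : Pt n} (hf : DifferentiableAt ℝ f x)
    (hg : DifferentiableAt ℝ g x) (a : Fin n) :
    pd (fun y => f y + g y) a x = pd f a x + pd g a x := by
  simp [pd, fderiv_fun_add hf hg]

lemma pd_mul {n : ℕ} {f g : Pt n → ℝ} {x : Pt n} (hf : DifferentiableAt ℝ f x)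
    (hg : DifferentiableAt ℝ g x) (a : Fin n) :
    pd (fun y => f y * g y) a x = pd f a x * g x + f x * pd g a x := by
  simp [pd, fderiv_fun_mul hf hg]; ring

lemma pd_sum {n : ℕ} {ι : Type*} (s : Finset ι) {f : ι → Pt n → ℝ} {x : Pt n}
    (hf : ∀ i ∈ s, DifferentiableAt ℝ (f i) x) (a : Fin n) :
    pd (fun y => ∑ i ∈ s, f i y) a x = ∑ i ∈ s, pd (f i) a x := by
  simp [pd, fderiv_fun_sum hf]

lemma pd_comp {d m : ℕ} (F : Pt m → ℝ) (Φ : Pt d → Pt m) (p : Pt d) (a : Fin d)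
    (hF : DifferentiableAt ℝ F (Φ p)) (hΦ : DifferentiableAt ℝ Φ p) :
    pd (fun q => F (Φ q)) a p = ∑ μ, fderiv ℝ Φ p (Pi.single a 1) μ * pd F μ (Φ p) := by
  have h : pd (fun q => F (Φ q)) a p = fderiv ℝ F (Φ p) (fderiv ℝ Φ p (Pi.single a 1)) := by
    rw [pd, show (fun q => F (Φ q)) = F ∘ Φ from rfl, fderiv_comp p hF hΦ]; rfl
  rw [h, fderiv_apply_coords]

lemma pd_gsymm {n : ℕ} {g : Pt n → Fin n → Fin n → ℝ} (hgsymm : ∀ x a b, g x a b = g x b a)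
    (a b c : Fin n) (x : Pt n) :
    pd (fun y => g y a b) c x = pd (fun y => g y b a) c x := by
  congr 1; ext y; exact hgsymm y a b

lemma sum_swap_inner {k l m : ℕ} (f : Fin k → Fin l → Fin m → ℝ) :
    ∑ a, ∑ b, ∑ c, f a b c = ∑ a, ∑ c, ∑ b, f a b c :=
  Finset.sum_congr rfl fun a _ => Finset.sum_comm

lemma right_inv {n : ℕ} {g ginv : Pt n → Fin n → Fin n → ℝ}
    (hinv : ∀ x a b, (∑ c, ginv x a c * g x c b) = if a = b then (1:ℝ) else 0) :
    ∀ x a b, (∑ c, g x a c * ginv x c b) = if a = b then (1:ℝ) else 0 := by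
  intro x a b
  let M : Matrix (Fin n) (Fin n) ℝ := fun i j => ginv x i j
  let N : Matrix (Fin n) (Fin n) ℝ := fun i j => g x i j
  have hMN : M * N = 1 := by
    ext i j
    rw [Matrix.mul_apply]
    simp [M, N, hinv x i j, Matrix.one_apply]
  have hNM : N * M = 1 := mul_eq_one_comm.mp hMN
  have h := congrFun (congrFun hNM a) b
  rw [Matrix.mul_apply] at h
  simpa [M, N, Matrix.one_apply] using h

lemma lowChr {n : ℕ} {g ginv : Pt n → Fin n → Fin n → ℝ}
    (hgsymm : ∀ x a b, g x a b = g x b a)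
    (hinv : ∀ x a b, (∑ c, ginv x a c * g x c b) = if a = b then (1:ℝ) else 0)
    (x : Pt n) (μ ν ρ : Fin n) :
    ∑ c, Chr g ginv c μ ν x * g x c ρ
      = (1/2) * (pd (fun y => g y ρ μ) ν x + pd (fun y => g y ρ ν) μ x
          - pd (fun y => g y μ ν) ρ x) := by
  have hri := right_inv hinv
  simp only [Chr]
  have step1 : ∀ c : Fin n,
      ((1/2) * ∑ e, ginv x c e *
        (pd (fun y => g y e μ) ν x + pd (fun y => g y e ν) μ x - pd (fun y => g y μ ν) e x))
        * g x c ρ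
      = ∑ e, (g x ρ c * ginv x c e) *
          ((1/2) * (pd (fun y => g y e μ) ν x + pd (fun y => g y e ν) μ x
            - pd (fun y => g y μ ν) e x)) := by
    intro c
    rw [Finset.mul_sum, Finset.sum_mul]
    refine Finset.sum_congr rfl fun e _ => ?_
    rw [hgsymm x ρ c]; ring
  rw [Finset.sum_congr rfl fun c _ => step1 c, Finset.sum_comm]
  have step2 : ∀ e : Fin n,
      ∑ c, (g x ρ c * ginv x c e) *
        ((1/2) * (pd (fun y => g y e μ) ν x + pd (fun y => g y e ν) μ x
          - pd (fun y => g y μ ν) e x))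
      = (if ρ = e then (1:ℝ) else 0) *
        ((1/2) * (pd (fun y => g y e μ) ν x + pd (fun y => g y e ν) μ x
          - pd (fun y => g y μ ν) e x)) := by
    intro e
    rw [← Finset.sum_mul, hri x ρ e]
  rw [Finset.sum_congr rfl fun e _ => step2 e]
  simp

section PerSide

variable {n : ℕ} {g ginv : Pt n → Fin n → Fin n → ℝ} {ξ : Pt n → Pt n}

lemma pd_flat (hg : ∀ a b, ContDiff ℝ (⊤ : ℕ∞) fun x => g x a b)
    (hξ : ContDiff ℝ (⊤ : ℕ∞) ξ) (x : Pt n) (α β : Fin n) :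
    pd (fun y => flat g ξ y β) α x
      = ∑ c, (pd (fun y => g y β c) α x * ξ x c + g x β c * pd (fun y => ξ y c) α x) := by
  have h1 : ∀ c : Fin n, DifferentiableAt ℝ (fun y => g y β c) x :=
    fun c => ((hg β c).differentiable (by simp)).differentiableAt
  have h2 : ∀ c : Fin n, DifferentiableAt ℝ (fun y => ξ y c) x :=
    fun c => (((contDiff_pi.mp hξ) c).differentiable (by simp)).differentiableAt
  have h : (fun y => flat g ξ y β) = fun y => ∑ c, g y β c * ξ y c := rfl
  rw [h, pd_sum (f := fun c y => g y β c * ξ y c) _ (fun c _ => (h1 c).mul (h2 c))]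
  exact Finset.sum_congr rfl fun c _ => pd_mul (h1 c) (h2 c) α

lemma chr_flat (hgsymm : ∀ x a b, g x a b = g x b a)
    (hinv : ∀ x a b, (∑ c, ginv x a c * g x c b) = if a = b then (1:ℝ) else 0)
    (x : Pt n) (α β : Fin n) :
    ∑ c, Chr g ginv c α β x * flat g ξ x c
      = ∑ e, ξ x e * ((1/2) * (pd (fun y => g y e α) β x + pd (fun y => g y e β) α x
          - pd (fun y => g y α β) e x)) := by
  have h : ∀ c : Fin n, Chr g ginv c α β x * flat g ξ x c
      = ∑ e, (Chr g ginv c α β x * g x c e) * ξ x e := by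
    intro c
    simp only [flat, Finset.mul_sum]
    exact Finset.sum_congr rfl fun e _ => by ring
  rw [Finset.sum_congr rfl fun c _ => h c, Finset.sum_comm]
  refine Finset.sum_congr rfl fun e _ => ?_
  rw [← Finset.sum_mul, lowChr hgsymm hinv x α β e]
  ring

/-- The Killing-operator identity: symmetrized covariant derivative of `ξ_♭` is `ℒ_ξ g`. -/
lemma covD_symm_eq_lieD (hg : ∀ a b, ContDiff ℝ (⊤ : ℕ∞) fun x => g x a b)
    (hgsymm : ∀ x a b, g x a b = g x b a)
    (hinv : ∀ x a b, (∑ c, ginv x a c * g x c b) = if a = b then (1:ℝ) else 0)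
    (hξ : ContDiff ℝ (⊤ : ℕ∞) ξ) (x : Pt n) (α β : Fin n) :
    covD g ginv (flat g ξ) x α β + covD g ginv (flat g ξ) x β α = lieD g ξ x α β := by
  simp only [covD]
  rw [pd_flat hg hξ x α β, pd_flat hg hξ x β α,
    chr_flat hgsymm hinv x α β, chr_flat hgsymm hinv x β α]
  simp only [lieD, ← Finset.sum_add_distrib, ← Finset.sum_sub_distrib]
  refine Finset.sum_congr rfl fun c _ => ?_
  rw [pd_gsymm hgsymm β c α, pd_gsymm hgsymm α c β, hgsymm x β c,
    pd_gsymm hgsymm β α c]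
  ring

end PerSide

end Helpers

section Surface

variable {d : ℕ} {g ginv : Pt (d+1) → Fin (d+1) → Fin (d+1) → ℝ}
  {Φ : Pt d → Pt (d+1)} {ℓ : Pt d → Pt (d+1)} {ξ : Pt (d+1) → Pt (d+1)}

lemma sum_rot3 {ι₁ ι₂ ι₃ : Type*} [Fintype ι₁] [Fintype ι₂] [Fintype ι₃]
    (f : ι₁ → ι₂ → ι₃ → ℝ) :
    ∑ a, ∑ b, ∑ c, f a b c = ∑ b, ∑ c, ∑ a, f a b c := by
  rw [Finset.sum_comm]
  exact Finset.sum_congr rfl fun b _ => Finset.sum_comm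

lemma sum_rot4 {ι₁ ι₂ ι₃ ι₄ : Type*} [Fintype ι₁] [Fintype ι₂] [Fintype ι₃] [Fintype ι₄]
    (f : ι₁ → ι₂ → ι₃ → ι₄ → ℝ) :
    ∑ a, ∑ b, ∑ c, ∑ e, f a b c e = ∑ b, ∑ c, ∑ e, ∑ a, f a b c e := by
  rw [Finset.sum_comm]
  refine Finset.sum_congr rfl fun b _ => ?_
  rw [Finset.sum_comm]
  exact Finset.sum_congr rfl fun c _ => Finset.sum_comm

/-- Transversal part of the covariant derivative along `Σ`, integrated by parts. -/
lemma covD_transversal (hΦ : ContDiff ℝ (⊤ : ℕ∞) Φ) (hℓ : ContDiff ℝ (⊤ : ℕ∞) ℓ)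
    (ω : Pt (d+1) → Fin (d+1) → ℝ) (p : Pt d) (a : Fin d)
    (hω : ∀ α, DifferentiableAt ℝ (fun x => ω x α) (Φ p)) :
    ∑ α, ∑ β, ℓ p α * eF Φ a p β * covD g ginv ω (Φ p) β α
    = pd (fun q => ∑ α, ω (Φ q) α * ℓ q α) a p
      - ∑ ν, ω (Φ p) ν * (pd (fun q => ℓ q ν) a p
          + ∑ ρ, ∑ σ, Chr g ginv ν ρ σ (Φ p) * eF Φ a p ρ * ℓ p σ) := by
  have hΦd : DifferentiableAt ℝ Φ p :=
    (hΦ.differentiable (by simp)).differentiableAt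
  have hℓc : ∀ ν, DifferentiableAt ℝ (fun q => ℓ q ν) p :=
    fun ν => (((contDiff_pi.mp hℓ) ν).differentiable (by simp)).differentiableAt
  have hωΦ : ∀ α, DifferentiableAt ℝ (fun q => ω (Φ q) α) p :=
    fun α => (hω α).comp p hΦd
  have hcomp : ∀ α, pd (fun q => ω (Φ q) α) a p
      = ∑ β, eF Φ a p β * pd (fun x => ω x α) β (Φ p) :=
    fun α => pd_comp _ Φ p a (hω α) hΦd
  have hpd : pd (fun q => ∑ α, ω (Φ q) α * ℓ q α) a p
      = ∑ α, ((∑ β, eF Φ a p β * pd (fun x => ω x α) β (Φ p)) * ℓ p α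
          + ω (Φ p) α * pd (fun q => ℓ q α) a p) := by
    rw [pd_sum (f := fun α q => ω (Φ q) α * ℓ q α) _ (fun α _ => (hωΦ α).mul (hℓc α))]
    refine Finset.sum_congr rfl fun α _ => ?_
    rw [pd_mul (hωΦ α) (hℓc α), hcomp α]
  have hA : (∑ α, ∑ β, ℓ p α * eF Φ a p β * pd (fun y => ω y α) β (Φ p))
      = ∑ α, (∑ β, eF Φ a p β * pd (fun x => ω x α) β (Φ p)) * ℓ p α := by
    refine Finset.sum_congr rfl fun α _ => ?_
    rw [Finset.sum_mul]
    exact Finset.sum_congr rfl fun β _ => by ring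
  have hC : (∑ α, ∑ β, ℓ p α * eF Φ a p β * ∑ c, Chr g ginv c β α (Φ p) * ω (Φ p) c)
      = ∑ ν, ω (Φ p) ν * ∑ ρ, ∑ σ, Chr g ginv ν ρ σ (Φ p) * eF Φ a p ρ * ℓ p σ := by
    calc ∑ α, ∑ β, ℓ p α * eF Φ a p β * ∑ c, Chr g ginv c β α (Φ p) * ω (Φ p) c
        = ∑ α, ∑ β, ∑ c, ℓ p α * eF Φ a p β * (Chr g ginv c β α (Φ p) * ω (Φ p) c) :=
          Finset.sum_congr rfl fun α _ => Finset.sum_congr rfl fun β _ => Finset.mul_sum ..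
      _ = ∑ β, ∑ c, ∑ α, ℓ p α * eF Φ a p β * (Chr g ginv c β α (Φ p) * ω (Φ p) c) :=
          sum_rot3 _
      _ = ∑ c, ∑ β, ∑ α, ℓ p α * eF Φ a p β * (Chr g ginv c β α (Φ p) * ω (Φ p) c) :=
          Finset.sum_comm
      _ = ∑ ν, ω (Φ p) ν * ∑ ρ, ∑ σ, Chr g ginv ν ρ σ (Φ p) * eF Φ a p ρ * ℓ p σ := by
          refine Finset.sum_congr rfl fun ν _ => ?_
          rw [Finset.mul_sum]
          refine Finset.sum_congr rfl fun ρ _ => ?_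
          rw [Finset.mul_sum]
          exact Finset.sum_congr rfl fun σ _ => by ring
  calc ∑ α, ∑ β, ℓ p α * eF Φ a p β * covD g ginv ω (Φ p) β α
      = (∑ α, ∑ β, ℓ p α * eF Φ a p β * pd (fun y => ω y α) β (Φ p))
        - (∑ α, ∑ β, ℓ p α * eF Φ a p β * ∑ c, Chr g ginv c β α (Φ p) * ω (Φ p) c) := by
        simp only [covD, mul_sub, Finset.sum_sub_distrib]
    _ = _ := by
        rw [hA, hC, hpd]
        simp only [mul_add, Finset.sum_add_distrib]
        ring

/-- The generalized second fundamental form as a contraction of `∇_{e_a} ℓ` with `e_b`. -/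
lemma Hgen_eq (hg : ∀ a b, ContDiff ℝ (⊤ : ℕ∞) fun x => g x a b)
    (hgsymm : ∀ x a b, g x a b = g x b a)
    (hinv : ∀ x a b, (∑ c, ginv x a c * g x c b) = if a = b then (1:ℝ) else 0)
    (hΦ : ContDiff ℝ (⊤ : ℕ∞) Φ) (hℓ : ContDiff ℝ (⊤ : ℕ∞) ℓ)
    (p : Pt d) (a b : Fin d) :
    Hgen g ginv Φ ℓ a b p
    = ∑ ν, (∑ c, g (Φ p) ν c * eF Φ b p c) *
        (pd (fun q => ℓ q ν) a p
          + ∑ ρ, ∑ σ, Chr g ginv ν ρ σ (Φ p) * eF Φ a p ρ * ℓ p σ) := by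
  have hΦd : DifferentiableAt ℝ Φ p :=
    (hΦ.differentiable (by simp)).differentiableAt
  have hℓc : ∀ ν, DifferentiableAt ℝ (fun q => ℓ q ν) p :=
    fun ν => (((contDiff_pi.mp hℓ) ν).differentiable (by simp)).differentiableAt
  have hgd : ∀ ν ρ, DifferentiableAt ℝ (fun x => g x ν ρ) (Φ p) :=
    fun ν ρ => ((hg ν ρ).differentiable (by simp)).differentiableAt
  have step1 : ∀ ν, pd (fun q => flatS g Φ ℓ q ν) a p
      = ∑ ρ, ((∑ μ, eF Φ a p μ * pd (fun x => g x ν ρ) μ (Φ p)) * ℓ p ρ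
          + g (Φ p) ν ρ * pd (fun q => ℓ q ρ) a p) := by
    intro ν
    have hgc : ∀ ρ, DifferentiableAt ℝ (fun q => g (Φ q) ν ρ) p :=
      fun ρ => (hgd ν ρ).comp p hΦd
    have h0 : (fun q => flatS g Φ ℓ q ν) = fun q => ∑ ρ, g (Φ q) ν ρ * ℓ q ρ := rfl
    rw [h0, pd_sum (f := fun ρ q => g (Φ q) ν ρ * ℓ q ρ) _ (fun ρ _ => (hgc ρ).mul (hℓc ρ))]
    refine Finset.sum_congr rfl fun ρ _ => ?_
    have hc : pd (fun q => g (Φ q) ν ρ) a p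
        = ∑ μ, eF Φ a p μ * pd (fun x => g x ν ρ) μ (Φ p) :=
      pd_comp _ Φ p a (hgd ν ρ) hΦd
    rw [pd_mul (hgc ρ) (hℓc ρ), hc]
  have step2 : ∀ ν, ∑ c, (∑ μ, eF Φ a p μ * Chr g ginv c μ ν (Φ p)) * flatS g Φ ℓ p c
      = ∑ μ, ∑ ρ, eF Φ a p μ * ℓ p ρ *
          ((1/2) * (pd (fun y => g y ρ μ) ν (Φ p) + pd (fun y => g y ρ ν) μ (Φ p)
            - pd (fun y => g y μ ν) ρ (Φ p))) := by
    intro ν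
    have e1 : ∀ c, (∑ μ, eF Φ a p μ * Chr g ginv c μ ν (Φ p)) * flatS g Φ ℓ p c
        = ∑ μ, ∑ ρ, eF Φ a p μ * ℓ p ρ * (Chr g ginv c μ ν (Φ p) * g (Φ p) c ρ) := by
      intro c
      rw [show flatS g Φ ℓ p c = ∑ ρ, g (Φ p) c ρ * ℓ p ρ from rfl, Finset.sum_mul_sum]
      exact Finset.sum_congr rfl fun μ _ => Finset.sum_congr rfl fun ρ _ => by ring
    calc ∑ c, (∑ μ, eF Φ a p μ * Chr g ginv c μ ν (Φ p)) * flatS g Φ ℓ p c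
        = ∑ c, ∑ μ, ∑ ρ, eF Φ a p μ * ℓ p ρ * (Chr g ginv c μ ν (Φ p) * g (Φ p) c ρ) :=
          Finset.sum_congr rfl fun c _ => e1 c
      _ = ∑ μ, ∑ ρ, ∑ c, eF Φ a p μ * ℓ p ρ * (Chr g ginv c μ ν (Φ p) * g (Φ p) c ρ) :=
          sum_rot3 _
      _ = _ := by
          refine Finset.sum_congr rfl fun μ _ => Finset.sum_congr rfl fun ρ _ => ?_
          rw [← Finset.mul_sum, lowChr hgsymm hinv (Φ p) μ ν ρ]
  -- canonical pieces
  have hsplit : Hgen g ginv Φ ℓ a b p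
      = (∑ ν, eF Φ b p ν * pd (fun q => flatS g Φ ℓ q ν) a p)
        - ∑ ν, eF Φ b p ν *
            ∑ c, (∑ μ, eF Φ a p μ * Chr g ginv c μ ν (Φ p)) * flatS g Φ ℓ p c := by
    simp only [Hgen, mul_sub, Finset.sum_sub_distrib]
  have hT1 : (∑ ν, eF Φ b p ν * pd (fun q => flatS g Φ ℓ q ν) a p)
      = (∑ ν, ∑ ρ, eF Φ b p ν * g (Φ p) ν ρ * pd (fun q => ℓ q ρ) a p)
        + ∑ ν, ∑ ρ, ∑ μ, eF Φ b p ν * (eF Φ a p μ * pd (fun x => g x ν ρ) μ (Φ p) * ℓ p ρ) := by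
    rw [← Finset.sum_add_distrib]
    refine Finset.sum_congr rfl fun ν _ => ?_
    rw [step1 ν, Finset.mul_sum, ← Finset.sum_add_distrib]
    refine Finset.sum_congr rfl fun ρ _ => ?_
    rw [mul_add, Finset.sum_mul, Finset.mul_sum, add_comm]
    congr 1
    ring
  have hT3 : (∑ ν, eF Φ b p ν *
        ∑ c, (∑ μ, eF Φ a p μ * Chr g ginv c μ ν (Φ p)) * flatS g Φ ℓ p c)
      = ∑ ν, ∑ μ, ∑ ρ, eF Φ b p ν * (eF Φ a p μ * ℓ p ρ *
          ((1/2) * (pd (fun y => g y ρ μ) ν (Φ p) + pd (fun y => g y ρ ν) μ (Φ p)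
            - pd (fun y => g y μ ν) ρ (Φ p)))) := by
    refine Finset.sum_congr rfl fun ν _ => ?_
    rw [step2 ν, Finset.mul_sum]
    exact Finset.sum_congr rfl fun μ _ => Finset.mul_sum ..
  rw [hsplit, hT1, hT3]
  -- right-hand side expansion
  have hR : ∑ ν, (∑ c, g (Φ p) ν c * eF Φ b p c) *
      (pd (fun q => ℓ q ν) a p + ∑ ρ, ∑ σ, Chr g ginv ν ρ σ (Φ p) * eF Φ a p ρ * ℓ p σ)
      = (∑ ν, ∑ c, g (Φ p) ν c * eF Φ b p c * pd (fun q => ℓ q ν) a p)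
        + ∑ ν, ∑ c, ∑ ρ, ∑ σ, (g (Φ p) ν c * eF Φ b p c) *
            (Chr g ginv ν ρ σ (Φ p) * eF Φ a p ρ * ℓ p σ) := by
    rw [← Finset.sum_add_distrib]
    refine Finset.sum_congr rfl fun ν _ => ?_
    rw [mul_add]
    congr 1
    · rw [Finset.sum_mul]
    · rw [Finset.sum_mul]
      refine Finset.sum_congr rfl fun c _ => ?_
      rw [Finset.mul_sum]
      exact Finset.sum_congr rfl fun ρ _ => Finset.mul_sum ..
  rw [hR]
  have hR1 : (∑ ν, ∑ c, g (Φ p) ν c * eF Φ b p c * pd (fun q => ℓ q ν) a p)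
      = ∑ ν, ∑ ρ, eF Φ b p ν * g (Φ p) ν ρ * pd (fun q => ℓ q ρ) a p := by
    rw [Finset.sum_comm]
    refine Finset.sum_congr rfl fun ν _ => Finset.sum_congr rfl fun ρ _ => ?_
    rw [hgsymm (Φ p) ρ ν]
    ring
  rw [hR1]
  have hS : (∑ ν, ∑ c, ∑ ρ, ∑ σ, (g (Φ p) ν c * eF Φ b p c) *
        (Chr g ginv ν ρ σ (Φ p) * eF Φ a p ρ * ℓ p σ))
      = ∑ ν, ∑ μ, ∑ ρ, (eF Φ b p ν * eF Φ a p μ * ℓ p ρ) *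
          ((1/2) * (pd (fun y => g y ν μ) ρ (Φ p) + pd (fun y => g y ν ρ) μ (Φ p)
            - pd (fun y => g y μ ρ) ν (Φ p))) := by
    rw [sum_rot4 (fun ν c ρ σ => (g (Φ p) ν c * eF Φ b p c) *
      (Chr g ginv ν ρ σ (Φ p) * eF Φ a p ρ * ℓ p σ))]
    refine Finset.sum_congr rfl fun c _ => Finset.sum_congr rfl fun ρ _ =>
      Finset.sum_congr rfl fun σ _ => ?_
    have e2 : ∀ ν, (g (Φ p) ν c * eF Φ b p c) * (Chr g ginv ν ρ σ (Φ p) * eF Φ a p ρ * ℓ p σ)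
        = (eF Φ b p c * eF Φ a p ρ * ℓ p σ) * (Chr g ginv ν ρ σ (Φ p) * g (Φ p) ν c) := by
      intro ν; ring
    rw [Finset.sum_congr rfl fun ν _ => e2 ν, ← Finset.mul_sum,
      lowChr hgsymm hinv (Φ p) ρ σ c]
  rw [hS]
  have hT23 : (∑ ν, ∑ ρ, ∑ μ, eF Φ b p ν * (eF Φ a p μ * pd (fun x => g x ν ρ) μ (Φ p) * ℓ p ρ))
      - (∑ ν, ∑ μ, ∑ ρ, eF Φ b p ν * (eF Φ a p μ * ℓ p ρ *
          ((1/2) * (pd (fun y => g y ρ μ) ν (Φ p) + pd (fun y => g y ρ ν) μ (Φ p)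
            - pd (fun y => g y μ ν) ρ (Φ p)))))
      = ∑ ν, ∑ μ, ∑ ρ, (eF Φ b p ν * eF Φ a p μ * ℓ p ρ) *
          ((1/2) * (pd (fun y => g y ν μ) ρ (Φ p) + pd (fun y => g y ν ρ) μ (Φ p)
            - pd (fun y => g y μ ρ) ν (Φ p))) := by
    rw [show (∑ ν, ∑ ρ, ∑ μ, eF Φ b p ν * (eF Φ a p μ * pd (fun x => g x ν ρ) μ (Φ p) * ℓ p ρ))
        = ∑ ν, ∑ μ, ∑ ρ, eF Φ b p ν * (eF Φ a p μ * pd (fun x => g x ν ρ) μ (Φ p) * ℓ p ρ)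
      from Finset.sum_congr rfl fun ν _ => Finset.sum_comm]
    rw [← Finset.sum_sub_distrib]
    refine Finset.sum_congr rfl fun ν _ => ?_
    rw [← Finset.sum_sub_distrib]
    refine Finset.sum_congr rfl fun μ _ => ?_
    rw [← Finset.sum_sub_distrib]
    refine Finset.sum_congr rfl fun ρ _ => ?_
    rw [pd_gsymm hgsymm ν μ ρ (Φ p), pd_gsymm hgsymm ν ρ μ (Φ p),
      pd_gsymm hgsymm μ ρ ν (Φ p), pd_gsymm hgsymm μ ν ρ (Φ p)]
    ring
  rw [← hT23]
  ring

end Surface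

section Key

variable {d : ℕ} {g ginv : Pt (d+1) → Fin (d+1) → Fin (d+1) → ℝ}
  {Φ : Pt d → Pt (d+1)} {ℓ : Pt d → Pt (d+1)} {ξ : Pt (d+1) → Pt (d+1)}

/-- Expansion of `ξ_♭` along `Σ` in terms of the frame components. -/
lemma flat_tangent (ξc : Fin d → Pt d → ℝ)
    (htan : ∀ p, ξ (Φ p) = ∑ b, ξc b p • eF Φ b p) (p : Pt d) (ν : Fin (d+1)) :
    flat g ξ (Φ p) ν = ∑ b, ξc b p * ∑ c, g (Φ p) ν c * eF Φ b p c := by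
  have h0 : flat g ξ (Φ p) ν = ∑ c, g (Φ p) ν c * ξ (Φ p) c := rfl
  rw [h0, htan p]
  simp only [Finset.sum_apply, Pi.smul_apply, smul_eq_mul]
  calc ∑ c, g (Φ p) ν c * ∑ b, ξc b p * eF Φ b p c
      = ∑ c, ∑ b, ξc b p * (g (Φ p) ν c * eF Φ b p c) := by
        refine Finset.sum_congr rfl fun c _ => ?_
        rw [Finset.mul_sum]
        exact Finset.sum_congr rfl fun b _ => by ring
    _ = ∑ b, ∑ c, ξc b p * (g (Φ p) ν c * eF Φ b p c) := Finset.sum_comm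
    _ = _ := Finset.sum_congr rfl fun b _ => (Finset.mul_sum ..).symm

/-- The scalar `ξ_♭(ℓ)` along `Σ` in terms of the matching data. -/
lemma G_eq_gdot (ξc : Fin d → Pt d → ℝ)
    (htan : ∀ p, ξ (Φ p) = ∑ b, ξc b p • eF Φ b p) (q : Pt d) :
    ∑ α, flat g ξ (Φ q) α * ℓ q α
      = ∑ b, ξc b q * gdot g (Φ q) (ℓ q) (eF Φ b q) := by
  calc ∑ α, flat g ξ (Φ q) α * ℓ q α
      = ∑ α, ∑ b, ξc b q * (∑ c, g (Φ q) α c * eF Φ b q c) * ℓ q α := by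
        refine Finset.sum_congr rfl fun α _ => ?_
        rw [flat_tangent ξc htan q α, Finset.sum_mul]
    _ = ∑ b, ∑ α, ξc b q * (∑ c, g (Φ q) α c * eF Φ b q c) * ℓ q α := Finset.sum_comm
    _ = _ := by
        refine Finset.sum_congr rfl fun b _ => ?_
        rw [show gdot g (Φ q) (ℓ q) (eF Φ b q)
            = ∑ α, ∑ c, g (Φ q) α c * ℓ q α * eF Φ b q c from rfl, Finset.mul_sum]
        refine Finset.sum_congr rfl fun α _ => ?_
        rw [mul_assoc, Finset.sum_mul]
        exact congrArg (fun z => ξc b q * z) (Finset.sum_congr rfl fun c _ => by ring)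

/-- Contraction of the lie-derivative term for conformal Killing fields. -/
lemma lie_term_eq (A : Pt (d+1) → ℝ)
    (hlie : ∀ x a b, lieD g ξ x a b = A x * g x a b) (p : Pt d) (a : Fin d) :
    ∑ α, ∑ β, ℓ p α * eF Φ a p β * lieD g ξ (Φ p) α β
      = A (Φ p) * gdot g (Φ p) (ℓ p) (eF Φ a p) := by
  rw [show gdot g (Φ p) (ℓ p) (eF Φ a p)
      = ∑ α, ∑ β, g (Φ p) α β * ℓ p α * eF Φ a p β from rfl, Finset.mul_sum]
  refine Finset.sum_congr rfl fun α _ => ?_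
  rw [Finset.mul_sum]
  refine Finset.sum_congr rfl fun β _ => ?_
  rw [hlie (Φ p) α β]
  ring

/-- STATEMENT 11, single-sided formula. -/
lemma Bcoef_formula
    (hg : ∀ a b, ContDiff ℝ (⊤ : ℕ∞) fun x => g x a b)
    (hgsymm : ∀ x a b, g x a b = g x b a)
    (hinv : ∀ x a b, (∑ c, ginv x a c * g x c b) = if a = b then (1:ℝ) else 0)
    (hΦ : ContDiff ℝ (⊤ : ℕ∞) Φ) (hℓ : ContDiff ℝ (⊤ : ℕ∞) ℓ)
    (hξ : ContDiff ℝ (⊤ : ℕ∞) ξ) (ξc : Fin d → Pt d → ℝ)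
    (htan : ∀ p, ξ (Φ p) = ∑ b, ξc b p • eF Φ b p) (p : Pt d) (a : Fin d) :
    Bcoef g ginv Φ ℓ (flat g ξ) a p
    = (∑ α, ∑ β, ℓ p α * eF Φ a p β * lieD g ξ (Φ p) α β)
      - 2 * pd (fun q => ∑ α, flat g ξ (Φ q) α * ℓ q α) a p
      + 2 * ∑ b, ξc b p * Hgen g ginv Φ ℓ a b p := by
  have hgd : ∀ ν ρ, DifferentiableAt ℝ (fun x => g x ν ρ) (Φ p) :=
    fun ν ρ => ((hg ν ρ).differentiable (by simp)).differentiableAt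
  have hξd : ∀ c, DifferentiableAt ℝ (fun x => ξ x c) (Φ p) :=
    fun c => (((contDiff_pi.mp hξ) c).differentiable (by simp)).differentiableAt
  have hωd : ∀ α, DifferentiableAt ℝ (fun x => flat g ξ x α) (Φ p) := by
    intro α
    have h0 : (fun x => flat g ξ x α) = fun x => ∑ c, g x α c * ξ x c := rfl
    rw [h0]
    exact DifferentiableAt.fun_sum fun c _ => (hgd α c).mul (hξd c)
  have key1 := covD_transversal (g := g) (ginv := ginv) hΦ hℓ (flat g ξ) p a hωd
  have hB : Bcoef g ginv Φ ℓ (flat g ξ) a p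
      = (∑ α, ∑ β, ℓ p α * eF Φ a p β * lieD g ξ (Φ p) α β)
        - 2 * ∑ α, ∑ β, ℓ p α * eF Φ a p β * covD g ginv (flat g ξ) (Φ p) β α := by
    calc Bcoef g ginv Φ ℓ (flat g ξ) a p
        = ∑ α, ∑ β, (ℓ p α * eF Φ a p β * lieD g ξ (Φ p) α β
            - 2 * (ℓ p α * eF Φ a p β * covD g ginv (flat g ξ) (Φ p) β α)) := by
          refine Finset.sum_congr rfl fun α _ => Finset.sum_congr rfl fun β _ => ?_
          rw [← covD_symm_eq_lieD hg hgsymm hinv hξ (Φ p) α β]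
          ring
      _ = _ := by
          simp only [Finset.sum_sub_distrib, Finset.mul_sum]
  rw [hB, key1]
  have hcontr : (∑ ν, flat g ξ (Φ p) ν * (pd (fun q => ℓ q ν) a p
      + ∑ ρ, ∑ σ, Chr g ginv ν ρ σ (Φ p) * eF Φ a p ρ * ℓ p σ))
      = ∑ b, ξc b p * Hgen g ginv Φ ℓ a b p := by
    calc ∑ ν, flat g ξ (Φ p) ν * (pd (fun q => ℓ q ν) a p
        + ∑ ρ, ∑ σ, Chr g ginv ν ρ σ (Φ p) * eF Φ a p ρ * ℓ p σ)
        = ∑ ν, ∑ b, ξc b p * (∑ c, g (Φ p) ν c * eF Φ b p c) *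
            (pd (fun q => ℓ q ν) a p
              + ∑ ρ, ∑ σ, Chr g ginv ν ρ σ (Φ p) * eF Φ a p ρ * ℓ p σ) := by
          refine Finset.sum_congr rfl fun ν _ => ?_
          rw [flat_tangent ξc htan p ν, Finset.sum_mul]
      _ = ∑ b, ∑ ν, ξc b p * (∑ c, g (Φ p) ν c * eF Φ b p c) *
            (pd (fun q => ℓ q ν) a p
              + ∑ ρ, ∑ σ, Chr g ginv ν ρ σ (Φ p) * eF Φ a p ρ * ℓ p σ) := Finset.sum_comm
      _ = _ := by
          refine Finset.sum_congr rfl fun b _ => ?_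
          rw [Hgen_eq hg hgsymm hinv hΦ hℓ p a b, Finset.mul_sum]
          exact Finset.sum_congr rfl fun ν _ => by ring
  rw [hcontr]
  ring

end Key

/-- for generators tangent to the matching hypersurface with common
frame components `ξ^b`, the jump of the transversal component of `d(ξ_♭)` satisfies
`[B_a] = ℓ^α e_a^β [ℒ_ξ g_{αβ}] + 2 ξ^b [H_{ab}]`; in particular, for conformal Killing
fields with matching conformal factors and `[H_{ab}] = 0`, `[B_a] = 0`. -/
theorem jump_of_Bcoef {d : ℕ}
    (gp ginvp gm ginvm : Pt (d+1) → Fin (d+1) → Fin (d+1) → ℝ)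
    (Φp Φm : Pt d → Pt (d+1)) (ℓp ℓm : Pt d → Pt (d+1))
    (ξp ξm : Pt (d+1) → Pt (d+1)) (ξc : Fin d → Pt d → ℝ)
    (hgp : ∀ a b, ContDiff ℝ (⊤ : ℕ∞) fun x => gp x a b)
    (hgm : ∀ a b, ContDiff ℝ (⊤ : ℕ∞) fun x => gm x a b)
    (hginvp : ∀ a b, ContDiff ℝ (⊤ : ℕ∞) fun x => ginvp x a b)
    (hginvm : ∀ a b, ContDiff ℝ (⊤ : ℕ∞) fun x => ginvm x a b)
    (hgpsymm : ∀ x a b, gp x a b = gp x b a)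
    (hgmsymm : ∀ x a b, gm x a b = gm x b a)
    (hinvp : ∀ x a b, (∑ c, ginvp x a c * gp x c b) = if a = b then (1:ℝ) else 0)
    (hinvm : ∀ x a b, (∑ c, ginvm x a c * gm x c b) = if a = b then (1:ℝ) else 0)
    (hΦp : ContDiff ℝ (⊤ : ℕ∞) Φp) (hΦpinj : Function.Injective Φp)
    (hΦpimm : ∀ p, Function.Injective (fderiv ℝ Φp p))
    (hΦm : ContDiff ℝ (⊤ : ℕ∞) Φm) (hΦminj : Function.Injective Φm)
    (hΦmimm : ∀ p, Function.Injective (fderiv ℝ Φm p))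
    (hℓp : ContDiff ℝ (⊤ : ℕ∞) ℓp) (hℓm : ContDiff ℝ (⊤ : ℕ∞) ℓm)
    (hξp : ContDiff ℝ (⊤ : ℕ∞) ξp) (hξm : ContDiff ℝ (⊤ : ℕ∞) ξm)
    (hξcs : ∀ b, ContDiff ℝ (⊤ : ℕ∞) (ξc b))
    -- preliminary junction conditions
    (hmatch : ∀ p a b, pull2 Φp gp p a b = pull2 Φm gm p a b)
    -- identification of the riggings: equal norms and products with the tangent frame
    (hℓnorm : ∀ p, gdot gp (Φp p) (ℓp p) (ℓp p) = gdot gm (Φm p) (ℓm p) (ℓm p))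
    (hℓe : ∀ p a, gdot gp (Φp p) (ℓp p) (eF Φp a p) = gdot gm (Φm p) (ℓm p) (eF Φm a p))
    -- ξ^± are tangent to Σ^± with the same frame components ξ^b
    (htanp : ∀ p, ξp (Φp p) = ∑ b, ξc b p • eF Φp b p)
    (htanm : ∀ p, ξm (Φm p) = ∑ b, ξc b p • eF Φm b p) :
    (∀ p a,
      Bcoef gp ginvp Φp ℓp (flat gp ξp) a p - Bcoef gm ginvm Φm ℓm (flat gm ξm) a p
      = ((∑ α, ∑ β, ℓp p α * eF Φp a p β * lieD gp ξp (Φp p) α β)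
          - ∑ α, ∑ β, ℓm p α * eF Φm a p β * lieD gm ξm (Φm p) α β)
        + 2 * ∑ b, ξc b p * (Hgen gp ginvp Φp ℓp a b p - Hgen gm ginvm Φm ℓm a b p))
    ∧
    (∀ αp αm : Pt (d+1) → ℝ,
      (∀ x a b, lieD gp ξp x a b = αp x * gp x a b) →
      (∀ x a b, lieD gm ξm x a b = αm x * gm x a b) →
      (∀ p, αp (Φp p) = αm (Φm p)) →
      (∀ p a b, Hgen gp ginvp Φp ℓp a b p = Hgen gm ginvm Φm ℓm a b p) →
      ∀ p a, Bcoef gp ginvp Φp ℓp (flat gp ξp) a p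
           = Bcoef gm ginvm Φm ℓm (flat gm ξm) a p) := by
  have part1 : ∀ p a,
      Bcoef gp ginvp Φp ℓp (flat gp ξp) a p - Bcoef gm ginvm Φm ℓm (flat gm ξm) a p
      = ((∑ α, ∑ β, ℓp p α * eF Φp a p β * lieD gp ξp (Φp p) α β)
          - ∑ α, ∑ β, ℓm p α * eF Φm a p β * lieD gm ξm (Φm p) α β)
        + 2 * ∑ b, ξc b p * (Hgen gp ginvp Φp ℓp a b p - Hgen gm ginvm Φm ℓm a b p) := by
    intro p a
    rw [Bcoef_formula hgp hgpsymm hinvp hΦp hℓp hξp ξc htanp p a,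
        Bcoef_formula hgm hgmsymm hinvm hΦm hℓm hξm ξc htanm p a]
    have hGeq : (fun q => ∑ α, flat gp ξp (Φp q) α * ℓp q α)
        = fun q => ∑ α, flat gm ξm (Φm q) α * ℓm q α := by
      funext q
      rw [G_eq_gdot ξc htanp q, G_eq_gdot ξc htanm q]
      exact Finset.sum_congr rfl fun b _ => by rw [hℓe q b]
    rw [hGeq]
    simp only [mul_sub, Finset.sum_sub_distrib]
    ring
  refine ⟨part1, ?_⟩
  intro αp αm hαp hαm hαeq hH p a
  have h := part1 p a
  rw [lie_term_eq αp hαp p a, lie_term_eq αm hαm p a] at h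
  have hz : (∑ b, ξc b p * (Hgen gp ginvp Φp ℓp a b p - Hgen gm ginvm Φm ℓm a b p)) = 0 := by
    refine Finset.sum_eq_zero fun b _ => ?_
    rw [hH p a b]; ring
  rw [hz, hαeq p, hℓe p a] at h
  linarith
end
end
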